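/- (Truth lemma for the canonical model.) Fix a second-level sequent Ψ ⇛ Φ. Let W₀ be the set of saturated first-level sequents Γ ⇒ Δ with Γ ∪ Δ ⊆ SF(Ψ,Φ) that are not cut-free provable in GLS_seq, let (Γ⇒Δ) R₀ (Γ'⇒Δ') iff Γ_□ ⊊ Γ'_□ and Γ_□ ⊆ Γ' (where Θ_□ = {φ : □φ ∈ Θ}), and let V₀((Γ⇒Δ), p) = true iff p ∈ Γ for propositional variables p. Then ⟨W₀, R₀, V₀⟩ is a GL-model, and for every formula φ and every world (Γ⇒Δ) ∈ W₀: if φ ∈ Γ then V₀((Γ⇒Δ), φ) = true, and if φ ∈ Δ then V₀((Γ⇒Δ), φ) = false. -/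

import Mathlib

/-- Modal formulas: propositional variables, ⊥, →, □. -/
inductive Formula : Type
  | var : ℕ → Formula
  | bot : Formula
  | imp : Formula → Formula → Formula
  | box : Formula → Formula
deriving DecidableEq

/-- Levels of sequents in GLS_seq: first level (⇒) and second level (⇛). -/
inductive SeqLevel : Type
  | one
  | two
deriving DecidableEq

/-- The set of subformulas of a formula. -/
def Formula.subf : Formula → Finset Formula
  | .var p => {.var p}
  | .bot => {.bot}
  | .imp φ ψ => insert (.imp φ ψ) (φ.subf ∪ ψ.subf)
  | .box φ => insert (.box φ) φ.subf

/-- SF(Ψ,Φ): all subformulas of formulas in Ψ ∪ Φ. -/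
def SF (Ψ Φ : Finset Formula) : Finset Formula := (Ψ ∪ Φ).biUnion Formula.subf

def Formula.isBox : Formula → Bool
  | .box _ => true
  | _ => false

def Formula.unbox : Formula → Formula
  | .box φ => φ
  | φ => φ

/-- Θ_□ = {φ : □φ ∈ Θ}. -/
def boxInv (Θ : Finset Formula) : Finset Formula :=
  (Θ.filter fun ψ => ψ.isBox).image Formula.unbox

/-- The sequent calculus GLS_seq, on sequents of two levels.  The Bool parameter
records whether the cut rule may be used: `GLSSeq true` is provability in GLS_seq,
`GLSSeq false` is cut-free provability.  The first-level fragment is exactly GL_seq. -/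
inductive GLSSeq : Bool → SeqLevel → Finset Formula → Finset Formula → Prop
  | init (c lv φ) : GLSSeq c lv {φ} {φ}
  | initBot (c lv) : GLSSeq c lv {Formula.bot} ∅
  | cut {lv Γ Δ} (φ) : GLSSeq true lv Γ (insert φ Δ) → GLSSeq true lv (insert φ Γ) Δ →
      GLSSeq true lv Γ Δ
  | weak {c lv Γ Δ Γ' Δ'} : Γ ⊆ Γ' → Δ ⊆ Δ' → GLSSeq c lv Γ Δ → GLSSeq c lv Γ' Δ'
  | impL {c lv Γ Δ φ ψ} : GLSSeq c lv Γ (insert φ Δ) → GLSSeq c lv (insert ψ Γ) Δ →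
      GLSSeq c lv (insert (.imp φ ψ) Γ) Δ
  | impR {c lv Γ Δ φ ψ} : GLSSeq c lv (insert φ Γ) (insert ψ Δ) →
      GLSSeq c lv Γ (insert (.imp φ ψ) Δ)
  | boxGL {c Γ φ} : GLSSeq c .one (Γ ∪ Γ.image .box ∪ {.box φ}) {φ} →
      GLSSeq c .one (Γ.image .box) {.box φ}
  | boxL {c Γ Δ} (φ) : GLSSeq c .two (insert φ Γ) Δ → GLSSeq c .two (insert (.box φ) Γ) Δ
  | lift {c Γ Δ} : GLSSeq c .one Γ Δ → GLSSeq c .two Γ Δ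

/-- The sequent calculus GL_seq (on first-level sequents only). -/
inductive GLSeq : Bool → Finset Formula → Finset Formula → Prop
  | init (c φ) : GLSeq c {φ} {φ}
  | initBot (c) : GLSeq c {Formula.bot} ∅
  | cut {Γ Δ} (φ) : GLSeq true Γ (insert φ Δ) → GLSeq true (insert φ Γ) Δ → GLSeq true Γ Δ
  | weak {c Γ Δ Γ' Δ'} : Γ ⊆ Γ' → Δ ⊆ Δ' → GLSeq c Γ Δ → GLSeq c Γ' Δ'
  | impL {c Γ Δ φ ψ} : GLSeq c Γ (insert φ Δ) → GLSeq c (insert ψ Γ) Δ →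
      GLSeq c (insert (.imp φ ψ) Γ) Δ
  | impR {c Γ Δ φ ψ} : GLSeq c (insert φ Γ) (insert ψ Δ) → GLSeq c Γ (insert (.imp φ ψ) Δ)
  | boxGL {c Γ φ} : GLSeq c (Γ ∪ Γ.image .box ∪ {.box φ}) {φ} → GLSeq c (Γ.image .box) {.box φ}

/-- Proof trees of GLS_seq (cut included). -/
inductive GLSTree : SeqLevel → Finset Formula → Finset Formula → Type
  | init (lv φ) : GLSTree lv {φ} {φ}
  | initBot (lv) : GLSTree lv {Formula.bot} ∅
  | cut {lv Γ Δ} (φ) : GLSTree lv Γ (insert φ Δ) → GLSTree lv (insert φ Γ) Δ → GLSTree lv Γ Δ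
  | weak {lv Γ Δ} (Γ' Δ' : Finset Formula) : Γ ⊆ Γ' → Δ ⊆ Δ' → GLSTree lv Γ Δ → GLSTree lv Γ' Δ'
  | impL {lv Γ Δ} (φ ψ) : GLSTree lv Γ (insert φ Δ) → GLSTree lv (insert ψ Γ) Δ →
      GLSTree lv (insert (.imp φ ψ) Γ) Δ
  | impR {lv Γ Δ} (φ ψ) : GLSTree lv (insert φ Γ) (insert ψ Δ) → GLSTree lv Γ (insert (.imp φ ψ) Δ)
  | boxGL (Γ φ) : GLSTree .one (Γ ∪ Γ.image .box ∪ {.box φ}) {φ} → GLSTree .one (Γ.image .box) {.box φ}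
  | boxL {Γ Δ} (φ) : GLSTree .two (insert φ Γ) Δ → GLSTree .two (insert (.box φ) Γ) Δ
  | lift {Γ Δ} : GLSTree .one Γ Δ → GLSTree .two Γ Δ

/-- The set of principal formulas of all (□L) rules occurring in a proof tree. -/
def GLSTree.principals : ∀ {lv Γ Δ}, GLSTree lv Γ Δ → Finset Formula
  | _, _, _, .init _ _ => ∅
  | _, _, _, .initBot _ => ∅
  | _, _, _, .cut _ t₁ t₂ => t₁.principals ∪ t₂.principals
  | _, _, _, .weak _ _ _ _ t => t.principals
  | _, _, _, .impL _ _ t₁ t₂ => t₁.principals ∪ t₂.principals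
  | _, _, _, .impR _ _ t => t.principals
  | _, _, _, .boxGL _ _ t => t.principals
  | _, _, _, .boxL φ t => insert (Formula.box φ) t.principals
  | _, _, _, .lift t => t.principals

/-- A proof tree bundled with its level and conclusion. -/
abbrev PGLSTree : Type :=
  (lv : SeqLevel) × (Γ : Finset Formula) × (Δ : Finset Formula) × GLSTree lv Γ Δ

/-- The set of subproofs of a proof tree (including the tree itself). -/
def GLSTree.subproofs {lv Γ Δ} (t : GLSTree lv Γ Δ) : Set PGLSTree :=
  insert ⟨lv, Γ, Δ, t⟩ <|
    match lv, Γ, Δ, t with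
    | _, _, _, .init _ _ => ∅
    | _, _, _, .initBot _ => ∅
    | _, _, _, .cut _ t₁ t₂ => t₁.subproofs ∪ t₂.subproofs
    | _, _, _, .weak _ _ _ _ t₁ => t₁.subproofs
    | _, _, _, .impL _ _ t₁ t₂ => t₁.subproofs ∪ t₂.subproofs
    | _, _, _, .impR _ _ t₁ => t₁.subproofs
    | _, _, _, .boxGL _ _ t₁ => t₁.subproofs
    | _, _, _, .boxL _ t₁ => t₁.subproofs
    | _, _, _, .lift t₁ => t₁.subproofs

/-- Kripke satisfaction over a frame `R` with atomic valuation `v`. -/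
def KSat {W : Type} (R : W → W → Prop) (v : W → ℕ → Prop) : Formula → W → Prop
  | .var p, w => v w p
  | .bot, _ => False
  | .imp φ ψ, w => KSat R v φ w → KSat R v ψ w
  | .box φ, w => ∀ w', R w w' → KSat R v φ w'

/-- A GL-model: a nonempty, transitive, converse well-founded Kripke model. -/
structure GLModel where
  World : Type
  ne : Nonempty World
  R : World → World → Prop
  trans : Transitive R
  cwf : ∀ f : ℕ → World, ¬ ∀ i, R (f i) (f (i + 1))
  val : World → ℕ → Prop

/-- Truth of a formula at a world of a GL-model. -/
def GLModel.sat (M : GLModel) (w : M.World) (φ : Formula) : Prop := KSat M.R M.val φ w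

/-- Truth of a sequent Γ ▸ Δ at a world: some γ ∈ Γ is false or some δ ∈ Δ is true. -/
def GLModel.seqTrue (M : GLModel) (w : M.World) (Γ Δ : Finset Formula) : Prop :=
  (∃ γ ∈ Γ, ¬ M.sat w γ) ∨ (∃ δ ∈ Δ, M.sat w δ)

/-- w is Sg-reflexive: □α → α is true at w for every □α ∈ Sg. -/
def GLModel.reflexiveFor (M : GLModel) (w : M.World) (S : Finset Formula) : Prop :=
  ∀ α : Formula, Formula.box α ∈ S → M.sat w ((Formula.box α).imp α)

/-- Saturation conditions (→L), (→R) for first-level sequents. -/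
def Saturated1 (Γ Δ : Finset Formula) : Prop :=
  (∀ φ ψ : Formula, φ.imp ψ ∈ Γ → φ ∈ Δ ∨ ψ ∈ Γ) ∧
  (∀ φ ψ : Formula, φ.imp ψ ∈ Δ → φ ∈ Γ ∧ ψ ∈ Δ)

/-- Saturation for second-level sequents: additionally (□L). -/
def Saturated2 (Γ Δ : Finset Formula) : Prop :=
  Saturated1 Γ Δ ∧ ∀ φ : Formula, Formula.box φ ∈ Γ → φ ∈ Γ

def Saturated : SeqLevel → Finset Formula → Finset Formula → Prop
  | .one => Saturated1
  | .two => Saturated2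

/-- The Hilbert system GL. -/
inductive GLHilbert : Formula → Prop
  | ax1 (φ ψ : Formula) : GLHilbert (φ.imp (ψ.imp φ))
  | ax2 (φ ψ χ : Formula) :
      GLHilbert ((φ.imp (ψ.imp χ)).imp ((φ.imp ψ).imp (φ.imp χ)))
  | ax3 (φ : Formula) : GLHilbert (((φ.imp .bot).imp .bot).imp φ)
  | axK (φ ψ : Formula) :
      GLHilbert ((Formula.box (φ.imp ψ)).imp ((Formula.box φ).imp (Formula.box ψ)))
  | axLob (φ : Formula) :
      GLHilbert ((Formula.box ((Formula.box φ).imp φ)).imp (Formula.box φ))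
  | mp {φ ψ} : GLHilbert (φ.imp ψ) → GLHilbert φ → GLHilbert ψ
  | nec {φ} : GLHilbert φ → GLHilbert (Formula.box φ)

/-- The Hilbert system GLS: theorems of GL and all □α → α, closed under modus ponens. -/
inductive GLSHilbert : Formula → Prop
  | gl {φ} : GLHilbert φ → GLSHilbert φ
  | refl (α : Formula) : GLSHilbert ((Formula.box α).imp α)
  | mp {φ ψ} : GLSHilbert (φ.imp ψ) → GLSHilbert φ → GLSHilbert ψ

/-- Conjunction (encoded with → and ⊥) of a list of formulas; empty conjunction is ⊤. -/
def Formula.conj : List Formula → Formula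
  | [] => Formula.bot.imp Formula.bot
  | φ :: l => ((φ.imp ((Formula.conj l).imp .bot)).imp .bot)

/-- Membership predicate for the canonical model: saturated first-level sequents over S
that are not cut-free provable in GLS_seq. -/
def W0pred (S : Finset Formula) (s : Finset Formula × Finset Formula) : Prop :=
  Saturated1 s.1 s.2 ∧ ¬ GLSSeq false SeqLevel.one s.1 s.2 ∧ s.1 ∪ s.2 ⊆ S

/-- Worlds of the canonical model. -/
def W0 (S : Finset Formula) : Type := {s : Finset Formula × Finset Formula // W0pred S s}

/-- Accessibility of the canonical model: (Γ⇒Δ) R₀ (Γ'⇒Δ') iff Γ_□ ⊊ Γ'_□ and Γ_□ ⊆ Γ'. -/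
def R0 (S : Finset Formula) (s t : W0 S) : Prop :=
  boxInv s.1.1 ⊂ boxInv t.1.1 ∧ boxInv s.1.1 ⊆ t.1.1

/-- Valuation of the canonical model: p is true at (Γ⇒Δ) iff p ∈ Γ. -/
def V0 (S : Finset Formula) (s : W0 S) (p : ℕ) : Prop := Formula.var p ∈ s.1.1

/-- The extended set of worlds W = W₀ ∪ ℕ. -/
def Wext (S : Finset Formula) : Type := W0 S ⊕ ℕ

/-- The extended accessibility relation, with distinguished world `wp` in W₀. -/
def Rext (S : Finset Formula) (wp : W0 S) : Wext S → Wext S → Prop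
  | Sum.inl x, Sum.inl y => R0 S x y
  | Sum.inr _, Sum.inl y => y = wp ∨ R0 S wp y
  | Sum.inr n, Sum.inr m => m < n
  | Sum.inl _, Sum.inr _ => False

/-- The extended valuation: worlds in ℕ behave like the distinguished world `wp`. -/
def Vext (S : Finset Formula) (wp : W0 S) : Wext S → ℕ → Prop
  | Sum.inl x, p => V0 S x p
  | Sum.inr _, p => V0 S wp p

/-! An unprovable sequent over a subformula-closed set `S` extends to a saturated one: each
violated saturation condition can be repaired by adding a formula of `S` while keeping the
sequent unprovable (the rules →L and →R read backwards). The only interesting case of the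
truth lemma is `□φ ∈ Δ`: then `Γ_□, □Γ_□, □φ ⇒ φ` is unprovable, for otherwise (□GL) proves
`□Γ_□ ⇒ □φ` and hence `Γ ⇒ Δ`; its saturation is an R₀-successor refuting `φ`. R₀ is
converse well-founded because `Γ_□` strictly grows along R₀ inside the finite set `S`. -/

lemma Finset.card_sdiff_insert_lt {α : Type*} [DecidableEq α] {s t : Finset α} {a : α}
    (hs : a ∈ s) (ht : a ∉ t) : (s \ insert a t).card < (s \ t).card := by
  rw [Finset.sdiff_insert]
  exact Finset.card_erase_lt_of_mem (Finset.mem_sdiff.2 ⟨hs, ht⟩)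

lemma Finset.card_sdiff_insert_le {α : Type*} [DecidableEq α] (s t : Finset α) (a : α) :
    (s \ insert a t).card ≤ (s \ t).card := by
  rw [Finset.sdiff_insert]
  exact Finset.card_erase_le

namespace Formula

lemma mem_subf_self (φ : Formula) : φ ∈ φ.subf := by
  cases φ <;> simp [subf]

lemma subf_subset_of_mem {α β : Formula} (h : α ∈ β.subf) : α.subf ⊆ β.subf := by
  induction β with
  | var p | bot => simp only [subf, Finset.mem_singleton] at h; rw [h]
  | imp φ ψ ihφ ihψ =>
    simp only [subf, Finset.mem_insert, Finset.mem_union] at h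
    rcases h with rfl | h | h
    · exact subset_rfl
    · exact (ihφ h).trans (Finset.subset_union_left.trans (Finset.subset_insert _ _))
    · exact (ihψ h).trans (Finset.subset_union_right.trans (Finset.subset_insert _ _))
  | box φ ih =>
    simp only [subf, Finset.mem_insert] at h
    rcases h with rfl | h
    · exact subset_rfl
    · exact (ih h).trans (Finset.subset_insert _ _)

end Formula

def SubfClosed (S : Finset Formula) : Prop := ∀ α ∈ S, α.subf ⊆ S

namespace SubfClosed

variable {S : Finset Formula}

lemma mem_of_imp_mem (hS : SubfClosed S) {φ ψ : Formula} (h : φ.imp ψ ∈ S) :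
    φ ∈ S ∧ ψ ∈ S :=
  ⟨hS _ h (by simp [Formula.subf, Formula.mem_subf_self]),
    hS _ h (by simp [Formula.subf, Formula.mem_subf_self])⟩

lemma mem_of_box_mem (hS : SubfClosed S) {φ : Formula} (h : φ.box ∈ S) : φ ∈ S :=
  hS _ h (by simp [Formula.subf, Formula.mem_subf_self])

end SubfClosed

lemma SF_subfClosed (Ψ Φ : Finset Formula) : SubfClosed (SF Ψ Φ) := by
  intro α hα β hβ
  simp only [SF, Finset.mem_biUnion] at hα ⊢
  obtain ⟨χ, hχ, hαχ⟩ := hα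
  exact ⟨χ, hχ, Formula.subf_subset_of_mem hαχ hβ⟩

lemma mem_boxInv {φ : Formula} {Θ : Finset Formula} : φ ∈ boxInv Θ ↔ φ.box ∈ Θ := by
  simp only [boxInv, Finset.mem_image, Finset.mem_filter]
  constructor
  · rintro ⟨χ, ⟨hχ, hbox⟩, rfl⟩
    cases χ <;> simp_all [Formula.isBox, Formula.unbox]
  · exact fun h => ⟨φ.box, ⟨h, rfl⟩, rfl⟩

lemma image_box_boxInv_subset (Θ : Finset Formula) : (boxInv Θ).image .box ⊆ Θ := by
  intro _ h
  obtain ⟨φ, hφ, rfl⟩ := Finset.mem_image.1 h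
  exact mem_boxInv.1 hφ

lemma card_boxInv_le (Θ : Finset Formula) : (boxInv Θ).card ≤ Θ.card :=
  Finset.card_image_le.trans (Finset.card_filter_le _ _)

namespace GLSSeq

lemma of_mem_of_mem {c lv} {Γ Δ : Finset Formula} {φ : Formula} (hΓ : φ ∈ Γ) (hΔ : φ ∈ Δ) :
    GLSSeq c lv Γ Δ :=
  weak (Finset.singleton_subset_iff.2 hΓ) (Finset.singleton_subset_iff.2 hΔ) (init c lv φ)

lemma of_bot_mem {c lv} {Γ Δ : Finset Formula} (h : Formula.bot ∈ Γ) : GLSSeq c lv Γ Δ :=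
  weak (Finset.singleton_subset_iff.2 h) (Finset.empty_subset _) (initBot c lv)

lemma union_nonempty_of_cutFree {c lv} {Γ Δ : Finset Formula} (h : GLSSeq c lv Γ Δ) :
    c = false → (Γ ∪ Δ).Nonempty := by
  induction h with
  | init _ _ φ => exact fun _ => ⟨φ, by simp⟩
  | initBot => exact fun _ => ⟨.bot, by simp⟩
  | cut => exact fun hc => nomatch hc
  | weak hΓ hΔ _ ih => exact fun hc => (ih hc).mono (Finset.union_subset_union hΓ hΔ)
  | impL | boxL => exact fun _ => ⟨_, Finset.mem_union_left _ (Finset.mem_insert_self _ _)⟩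
  | impR => exact fun _ => ⟨_, Finset.mem_union_right _ (Finset.mem_insert_self _ _)⟩
  | boxGL => exact fun _ => ⟨_, Finset.mem_union_right _ (Finset.mem_singleton_self _)⟩
  | lift _ ih => exact ih

lemma unprovable_insert_of_imp_mem_left {c lv} {Γ Δ : Finset Formula} {φ ψ : Formula}
    (h : φ.imp ψ ∈ Γ) (hΓΔ : ¬ GLSSeq c lv Γ Δ) :
    ¬ GLSSeq c lv Γ (insert φ Δ) ∨ ¬ GLSSeq c lv (insert ψ Γ) Δ := by
  by_contra! hboth
  have := impL hboth.1 hboth.2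
  rw [Finset.insert_eq_self.2 h] at this
  exact hΓΔ this

lemma unprovable_insert_of_imp_mem_right {c lv} {Γ Δ : Finset Formula} {φ ψ : Formula}
    (h : φ.imp ψ ∈ Δ) (hΓΔ : ¬ GLSSeq c lv Γ Δ) :
    ¬ GLSSeq c lv (insert φ Γ) (insert ψ Δ) := by
  intro hprov
  have := impR hprov
  rw [Finset.insert_eq_self.2 h] at this
  exact hΓΔ this

end GLSSeq

namespace W0

variable {S : Finset Formula}

lemma saturated (s : W0 S) : Saturated1 s.1.1 s.1.2 := s.2.1

lemma unprovable (s : W0 S) : ¬ GLSSeq false .one s.1.1 s.1.2 := s.2.2.1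

lemma subset (s : W0 S) : s.1.1 ∪ s.1.2 ⊆ S := s.2.2.2

lemma nonempty (S : Finset Formula) : Nonempty (W0 S) :=
  ⟨⟨(∅, ∅), ⟨by simp [Saturated1], fun h => by simpa using h.union_nonempty_of_cutFree rfl,
    by simp⟩⟩⟩

end W0

section Saturation

variable {S : Finset Formula}

lemma exists_unprovable_extension_of_not_saturated (hS : SubfClosed S)
    {Γ Δ : Finset Formula} (hsub : Γ ∪ Δ ⊆ S) (hΓΔ : ¬ GLSSeq false .one Γ Δ)
    (hns : ¬ Saturated1 Γ Δ) :
    ∃ Γ₁ Δ₁, Γ ⊆ Γ₁ ∧ Δ ⊆ Δ₁ ∧ Γ₁ ∪ Δ₁ ⊆ S ∧ ¬ GLSSeq false .one Γ₁ Δ₁ ∧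
      (S \ Γ₁).card + (S \ Δ₁).card < (S \ Γ).card + (S \ Δ).card := by
  obtain ⟨hΓS, hΔS⟩ := Finset.union_subset_iff.1 hsub
  simp only [Saturated1, not_and_or, not_forall, not_or] at hns
  rcases hns with ⟨φ, ψ, h, hφ, hψ⟩ | ⟨φ, ψ, h, hφψ⟩
  · obtain ⟨hφS, hψS⟩ := hS.mem_of_imp_mem (hΓS h)
    rcases GLSSeq.unprovable_insert_of_imp_mem_left h hΓΔ with hnp | hnp
    · refine ⟨Γ, insert φ Δ, subset_rfl, Finset.subset_insert _ _,
        Finset.union_subset hΓS (Finset.insert_subset hφS hΔS), hnp, ?_⟩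
      have := Finset.card_sdiff_insert_lt hφS hφ
      omega
    · refine ⟨insert ψ Γ, Δ, Finset.subset_insert _ _, subset_rfl,
        Finset.union_subset (Finset.insert_subset hψS hΓS) hΔS, hnp, ?_⟩
      have := Finset.card_sdiff_insert_lt hψS hψ
      omega
  · obtain ⟨hφS, hψS⟩ := hS.mem_of_imp_mem (hΔS h)
    refine ⟨insert φ Γ, insert ψ Δ, Finset.subset_insert _ _, Finset.subset_insert _ _,
      Finset.union_subset (Finset.insert_subset hφS hΓS) (Finset.insert_subset hψS hΔS),
      GLSSeq.unprovable_insert_of_imp_mem_right h hΓΔ, ?_⟩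
    have hleΓ := Finset.card_sdiff_insert_le S Γ φ
    have hleΔ := Finset.card_sdiff_insert_le S Δ ψ
    rcases hφψ with hφ | hψ
    · have := Finset.card_sdiff_insert_lt hφS hφ
      omega
    · have := Finset.card_sdiff_insert_lt hψS hψ
      omega

theorem exists_saturated_extension (hS : SubfClosed S) {Γ Δ : Finset Formula}
    (hsub : Γ ∪ Δ ⊆ S) (hΓΔ : ¬ GLSSeq false .one Γ Δ) :
    ∃ t : W0 S, Γ ⊆ t.1.1 ∧ Δ ⊆ t.1.2 := by
  by_cases hsat : Saturated1 Γ Δ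
  · exact ⟨⟨(Γ, Δ), hsat, hΓΔ, hsub⟩, subset_rfl, subset_rfl⟩
  obtain ⟨Γ₁, Δ₁, hΓ₁, hΔ₁, hsub₁, hΓΔ₁, _⟩ :=
    exists_unprovable_extension_of_not_saturated hS hsub hΓΔ hsat
  obtain ⟨t, hΓt, hΔt⟩ := exists_saturated_extension hS hsub₁ hΓΔ₁
  exact ⟨t, hΓ₁.trans hΓt, hΔ₁.trans hΔt⟩
termination_by (S \ Γ).card + (S \ Δ).card

end Saturation

section CanonicalModel

variable {S : Finset Formula}

lemma R0_trans {s t u : W0 S} (hst : R0 S s t) (htu : R0 S t u) : R0 S s u :=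
  ⟨hst.1.trans htu.1, hst.1.subset.trans htu.2⟩

lemma not_forall_R0_chain (f : ℕ → W0 S) : ¬ ∀ i, R0 S (f i) (f (i + 1)) := by
  intro hf
  have hmono : StrictMono fun i => (boxInv (f i).1.1).card :=
    strictMono_nat_of_lt_succ fun i => Finset.card_lt_card (hf i).1
  have hbound : (boxInv (f (S.card + 1)).1.1).card ≤ S.card :=
    (card_boxInv_le _).trans
      (Finset.card_le_card (Finset.union_subset_iff.1 (f (S.card + 1)).subset).1)
  have := hmono.id_le (S.card + 1)
  simp only [id] at this
  omega

lemma exists_R0_of_box_mem_succedent (hS : SubfClosed S) (s : W0 S) {φ : Formula}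
    (h : φ.box ∈ s.1.2) : ∃ t : W0 S, R0 S s t ∧ φ ∈ t.1.2 := by
  set Θ := boxInv s.1.1
  obtain ⟨hΓS, hΔS⟩ := Finset.union_subset_iff.1 s.subset
  have hboxΘ : Θ.image .box ⊆ s.1.1 := image_box_boxInv_subset _
  have hΘS : Θ ⊆ S := fun _ hψ => hS.mem_of_box_mem (hΓS (mem_boxInv.1 hψ))
  have hsub : Θ ∪ Θ.image .box ∪ {φ.box} ∪ {φ} ⊆ S := by
    simp only [Finset.union_subset_iff, Finset.singleton_subset_iff]
    exact ⟨⟨⟨hΘS, hboxΘ.trans hΓS⟩, hΔS h⟩, hS.mem_of_box_mem (hΔS h)⟩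
  have hnp : ¬ GLSSeq false .one (Θ ∪ Θ.image .box ∪ {φ.box}) {φ} := fun hp =>
    s.unprovable (.weak hboxΘ (Finset.singleton_subset_iff.2 h) (.boxGL hp))
  obtain ⟨t, hΓt, hΔt⟩ := exists_saturated_extension hS hsub hnp
  have hΘt : Θ ∪ Θ.image .box ∪ {φ.box} ⊆ t.1.1 := hΓt
  simp only [Finset.union_subset_iff, Finset.singleton_subset_iff] at hΘt
  obtain ⟨⟨hΘt, hboxΘt⟩, hφt⟩ := hΘt
  refine ⟨t, ⟨Finset.ssubset_iff_subset_ne.2 ⟨fun ψ hψ => ?_, fun hΘeq => ?_⟩, hΘt⟩,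
    hΔt (Finset.mem_singleton_self φ)⟩
  · exact mem_boxInv.2 (hboxΘt (Finset.mem_image_of_mem _ hψ))
  · have hφΘ : φ ∈ boxInv t.1.1 := mem_boxInv.2 hφt
    rw [← hΘeq] at hφΘ
    exact s.unprovable (.of_mem_of_mem (mem_boxInv.1 hφΘ) h)

theorem truth_lemma (hS : SubfClosed S) (φ : Formula) (s : W0 S) :
    (φ ∈ s.1.1 → KSat (R0 S) (V0 S) φ s) ∧ (φ ∈ s.1.2 → ¬ KSat (R0 S) (V0 S) φ s) := by
  induction φ generalizing s with
  | var p => exact ⟨id, fun hΔ hΓ => s.unprovable (.of_mem_of_mem hΓ hΔ)⟩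
  | bot => exact ⟨fun h => (s.unprovable (.of_bot_mem h)).elim, fun _ h => h⟩
  | imp φ ψ ihφ ihψ =>
    refine ⟨fun h hφ => ?_, fun h hφψ => ?_⟩
    · rcases s.saturated.1 φ ψ h with hφΔ | hψΓ
      · exact absurd hφ ((ihφ s).2 hφΔ)
      · exact (ihψ s).1 hψΓ
    · obtain ⟨hφΓ, hψΔ⟩ := s.saturated.2 φ ψ h
      exact (ihψ s).2 hψΔ (hφψ ((ihφ s).1 hφΓ))
  | box φ ih =>
    refine ⟨fun h t hst => (ih t).1 (hst.2 (mem_boxInv.2 h)), fun h hφ => ?_⟩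
    obtain ⟨t, hst, hφt⟩ := exists_R0_of_box_mem_succedent hS s h
    exact (ih t).2 hφt (hφ t hst)

end CanonicalModel

/-- Truth lemma for the canonical model: ⟨W₀, R₀, V₀⟩ is a GL-model (W₀ is nonempty, R₀
is transitive and converse well-founded), and every formula in the antecedent (resp.
succedent) of a world of W₀ is true (resp. false) at that world. -/
theorem canonical_model_truth_lemma (Ψ Φ : Finset Formula) :
    Nonempty (W0 (SF Ψ Φ)) ∧
    Transitive (R0 (SF Ψ Φ)) ∧
    (∀ f : ℕ → W0 (SF Ψ Φ), ¬ ∀ i, R0 (SF Ψ Φ) (f i) (f (i + 1))) ∧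
    ∀ (s : W0 (SF Ψ Φ)) (φ : Formula),
      (φ ∈ s.1.1 → KSat (R0 (SF Ψ Φ)) (V0 (SF Ψ Φ)) φ s) ∧
      (φ ∈ s.1.2 → ¬ KSat (R0 (SF Ψ Φ)) (V0 (SF Ψ Φ)) φ s) :=
  ⟨W0.nonempty _, fun _ _ _ => R0_trans, not_forall_R0_chain,
    fun s φ => truth_lemma (SF_subfClosed Ψ Φ) φ s⟩
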